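/- Let n ≥ 1, m ≥ 0, 𝔞 = (a_0,…,a_n) ∈ A_n(m), and let i ∈ M(𝔞) satisfy a_{i+1} > 0, and additionally a_{i−1} < a_{i+1} in case i ≥ 1. Define 𝔞′ = (a_0,…,a_{i−1}, a_i + 1, a_{i+1} − 1, a_{i+2},…,a_n) (one step of the raising algorithm). Then ω(𝔞′) = ω(𝔞), and consequently σ(𝔞′) = σ(𝔞). -/

import Mathlib

/- Common definitions following K. O'Hara's spread/degree and the signature
   refinement; elements of A_n(m) are lists of naturals of length n+1 and sum m. -/

namespace OHara

/-- The spread of `a = (a_0, …, a_n)`: the maximum of `a_i + a_{i+1}` over `0 ≤ i ≤ n-1`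
(`0` if the list has length ≤ 1). -/
def sprL (a : List ℕ) : ℕ :=
  (Finset.range (a.length - 1)).sup (fun i => a.getD i 0 + a.getD (i + 1) 0)

/-- `M(a)`: the set of left indices of maximal pairs. -/
def Mset (a : List ℕ) : Finset ℕ :=
  (Finset.range (a.length - 1)).filter (fun i => a.getD i 0 + a.getD (i + 1) 0 = sprL a)

/-- The connected component (maximal interval of consecutive integers) of `i` inside `S`. -/
def compF (S : Finset ℕ) (i : ℕ) : Finset ℕ :=
  S.filter (fun j => Finset.Icc (min i j) (max i j) ⊆ S)

/-- The left endpoints of the maximal intervals of consecutive integers of `S`. -/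
def leftEnds (S : Finset ℕ) : Finset ℕ :=
  S.filter (fun i => i = 0 ∨ (i - 1) ∉ S)

/-- O'Hara's degree: the sum over the maximal intervals `D` of `M(a)` of `⌈|D|/2⌉`. -/
def ecdL (a : List ℕ) : ℕ :=
  ∑ i ∈ leftEnds (Mset a), ((compF (Mset a) i).card + 1) / 2

/-- The set of active indices `Act(a) = M(a) ∪ (1 + M(a))`. -/
def ActF (a : List ℕ) : Finset ℕ :=
  Mset a ∪ (Mset a).image (· + 1)

/-- An index `j` survives in `ω(a)` iff it is not active, or it is the left endpoint `c` of a
maximal interval `D = [c, c+d]` of `M(a)` with `d` odd (i.e. `|D|` even). -/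
def survivesB (a : List ℕ) (j : ℕ) : Bool :=
  decide (j ∉ ActF a ∨ (j ∈ leftEnds (Mset a) ∧ Even (compF (Mset a) j).card))

/-- `ω(a)`: the result of removing from `a` the largest possible number of maximal pairs. -/
def omegaL (a : List ℕ) : List ℕ :=
  ((List.range a.length).filter (fun j => survivesB a j)).map (fun j => a.getD j 0)

/-- Fuel-driven recursion computing the signature (the fuel `a.length` in `sigmaL`
always suffices, since `ω` shortens a list of length ≥ 3 by at least 2). -/
def sigmaAux : ℕ → List ℕ → List ℕ
  | _, [] => []
  | 0, a => [a.sum]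
  | fuel + 1, a =>
    if a.length ≤ 2 then [a.sum]
    else List.replicate (ecdL a - 1) 0 ++ [sprL a - sprL (omegaL a)] ++ sigmaAux fuel (omegaL a)

/-- The signature `σ(a)`. -/
def sigmaL (a : List ℕ) : List ℕ := sigmaAux a.length a

/-- `m = Σ_{j=0}^k (j+1)·d_j` determined by a signature `(d_0, …, d_k)`. -/
def mOf (ds : List ℕ) : ℕ := ∑ j ∈ Finset.range ds.length, (j + 1) * ds.getD j 0

/-- `Q_n(d_0, …, d_k)`: the set of elements of `A_n(m)` of signature `(d_0, …, d_k)`. -/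
def Qset (n : ℕ) (ds : List ℕ) : Set (List ℕ) :=
  {a | a.length = n + 1 ∧ a.sum = mOf ds ∧ sigmaL a = ds}

/-- The rank `rk(a) = Σ i·a_i`. -/
def rkL (a : List ℕ) : ℕ := ∑ i ∈ Finset.range a.length, i * a.getD i 0

/-- `b` covers `a` in `A_n(m)`: `b` is obtained from `a` by replacing some consecutive pair
`(a_i, a_{i+1})` by `(a_i - 1, a_{i+1} + 1)`. -/
def coversL (b a : List ℕ) : Prop :=
  ∃ i, i + 1 < a.length ∧ 0 < a.getD i 0 ∧
    b = (a.set i (a.getD i 0 - 1)).set (i + 1) (a.getD (i + 1) 0 + 1)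

/-- Normalization phase of the raising algorithm: starting at index `i ∈ M(a)`, repeatedly
replace `i` by `i - 1` as long as `i ≥ 1` and `a_{i+1} = a_{i-1}`. -/
def rnormIdx (a : List ℕ) : ℕ → ℕ
  | 0 => 0
  | i + 1 => if a.getD (i + 2) 0 = a.getD i 0 then rnormIdx a i else i + 1

/-- One move of the raising algorithm from `(a, i)` with `i ∈ M(a)`: after normalizing the
index, either halt (`none`, at an initial element) or perform one step. -/
def raiseMove (a : List ℕ) (i : ℕ) : Option (List ℕ × ℕ) :=
  let j := rnormIdx a i
  if a.getD (j + 1) 0 = 0 then none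
  else some ((a.set j (a.getD j 0 + 1)).set (j + 1) (a.getD (j + 1) 0 - 1), j)

/-- The list of elements produced by iterating the raising algorithm (including the start). -/
def raiseList : ℕ → List ℕ → ℕ → List (List ℕ)
  | 0, a, _ => [a]
  | fuel + 1, a, i =>
    match raiseMove a i with
    | none => [a]
    | some (a', j) => a :: raiseList fuel a' j

/-- Normalization phase of the lowering algorithm: starting at index `i ∈ M(a)`, repeatedly
replace `i` by `i + 1` as long as `i ≤ n - 2` and `a_i = a_{i+2}` (fuel-driven). -/
def lnormIdx (a : List ℕ) : ℕ → ℕ → ℕ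
  | 0, i => i
  | fuel + 1, i =>
    if i + 2 < a.length ∧ a.getD i 0 = a.getD (i + 2) 0 then lnormIdx a fuel (i + 1) else i

/-- One move of the lowering algorithm from `(a, i)` with `i ∈ M(a)`: after normalizing the
index, either halt (`none`, at a terminal element) or perform one step. -/
def lowerMove (a : List ℕ) (i : ℕ) : Option (List ℕ × ℕ) :=
  let j := lnormIdx a a.length i
  if a.getD j 0 = 0 then none
  else some ((a.set j (a.getD j 0 - 1)).set (j + 1) (a.getD (j + 1) 0 + 1), j)

/-- The list of elements produced by iterating the lowering algorithm (including the start). -/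
def lowerList : ℕ → List ℕ → ℕ → List (List ℕ)
  | 0, a, _ => [a]
  | fuel + 1, a, i =>
    match lowerMove a i with
    | none => [a]
    | some (a', j) => a :: lowerList fuel a' j

/-- The colors of the successive covering relations produced by the lowering algorithm:
a lowering step at index `j` replaces `(a_j, a_{j+1})` by `(a_j - 1, a_{j+1} + 1)` and has
color `j + 1`. -/
def lowerColors : ℕ → List ℕ → ℕ → List ℕ
  | 0, _, _ => []
  | fuel + 1, a, i =>
    match lowerMove a i with
    | none => []
    | some (a', j) => (j + 1) :: lowerColors fuel a' j

/-- The transversal chain `T_i(a)`: the elements obtained from `a` by the raising algorithm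
together with those obtained by the lowering algorithm, both started at index `i ∈ M(a)`.
(The fuels `rk(a)` and `a.length * a.sum` are always sufficient, since each raising move
decreases the rank by 1 and each lowering move increases it by 1, within `[0, n·m]`.) -/
def Tset (a : List ℕ) (i : ℕ) : Set (List ℕ) :=
  {x | x ∈ raiseList (rkL a) a i ∨ x ∈ lowerList (a.length * a.sum) a i}

end OHara

/-!
The proof reads `ω` and the degree off run lengths in `M(𝔞)`: an index `j` survives in `ω(𝔞)`
iff `j - 1 ∉ M(𝔞)` and the run of `M(𝔞)` starting at `j` has even length, and `ecd(𝔞)` counts the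
`j` whose run has odd length. The raising step keeps the spread, turns `i` into a run of length
one of `M(𝔞′)` and, away from `i, i + 1`, changes run lengths only by `0` or `2`. Hence `i` never
survives in `ω(𝔞′)`; if `i + 1 ∈ M(𝔞)`, the possible survivor `a_i` of `ω(𝔞)` is traded for the
survivor `a′_{i+2} = a_{i+2} = a_i` of `ω(𝔞′)`, and otherwise the survivors coincide. Both
`{i, i + 1}` and its complement contain equally many odd-run starts for `𝔞` and `𝔞′`, so the
degree is preserved as well, and `σ` is a function of the length, sum, spread, degree and `ω`.
-/

namespace OHara

open Finset

section RunLength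

variable {S T : Finset ℕ} {j k t : ℕ}

theorem exists_add_notMem (S : Finset ℕ) (j : ℕ) : ∃ t, j + t ∉ S :=
  ⟨S.sup id + 1, fun h => by have := le_sup (f := id) h; simp only [id] at this; omega⟩

noncomputable def runLength (S : Finset ℕ) (j : ℕ) : ℕ :=
  Nat.find (exists_add_notMem S j)

theorem add_runLength_notMem : j + runLength S j ∉ S :=
  Nat.find_spec (exists_add_notMem S j)

theorem add_mem_of_lt_runLength (h : k < runLength S j) : j + k ∈ S :=
  not_not.mp (Nat.find_min (exists_add_notMem S j) h)

theorem runLength_eq (h : j + t ∉ S) (hlt : ∀ k < t, j + k ∈ S) : runLength S j = t :=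
  (Nat.find_min' _ h).antisymm (not_lt.mp fun ht => add_runLength_notMem (hlt _ ht))

theorem runLength_eq_zero (h : j ∉ S) : runLength S j = 0 :=
  runLength_eq (by simpa using h) (by simp)

theorem runLength_eq_succ (h : j ∈ S) : runLength S j = runLength S (j + 1) + 1 :=
  runLength_eq (by rw [← add_assoc, add_right_comm]; exact add_runLength_notMem) fun k hk => by
    rcases k with _ | k
    · simpa using h
    · simpa [add_assoc, add_comm 1 k] using add_mem_of_lt_runLength (S := S) (j := j + 1)
        (k := k) (by omega)

theorem runLength_congr (h : ∀ k, j ≤ k → (k ∈ S ↔ k ∈ T)) : runLength S j = runLength T j :=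
  runLength_eq ((h (j + runLength T j) (by omega)).not.mpr add_runLength_notMem)
    fun k hk => (h (j + k) (by omega)).mpr (add_mem_of_lt_runLength hk)

theorem even_runLength_iff_of_agree_below {m : ℕ}
    (hm : Even (runLength S m) ↔ Even (runLength T m)) (h : ∀ k < m, k ∈ S ↔ k ∈ T)
    (hj : j ≤ m) : Even (runLength S j) ↔ Even (runLength T j) := by
  induction hj using Nat.decreasingInduction with
  | self => exact hm
  | of_succ k hk ih =>
    by_cases hkS : k ∈ S
    · rw [runLength_eq_succ hkS, runLength_eq_succ ((h k hk).mp hkS), Nat.even_add_one,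
        Nat.even_add_one, ih]
    · rw [runLength_eq_zero hkS, runLength_eq_zero ((h k hk).not.mp hkS)]

end RunLength

section Components

variable {S : Finset ℕ} {c j : ℕ}

theorem mem_leftEnds : c ∈ leftEnds S ↔ c ∈ S ∧ (c = 0 ∨ c - 1 ∉ S) := mem_filter

theorem compF_eq_Ico (hc : c ∈ leftEnds S) : compF S c = Ico c (c + runLength S c) := by
  obtain ⟨hcS, hstart⟩ := mem_leftEnds.mp hc
  have hrun : ∀ x ∈ Ico c (c + runLength S c), x ∈ S := fun x hx => by
    rw [mem_Ico] at hx
    have hlt : x - c < runLength S c := by omega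
    have := add_mem_of_lt_runLength hlt
    rwa [Nat.add_sub_cancel' hx.1] at this
  ext k
  simp only [compF, mem_filter, mem_Ico]
  constructor
  · rintro ⟨-, hsub⟩
    refine ⟨not_lt.mp fun hk => ?_,
      not_le.mp fun hk => add_runLength_notMem (S := S) (j := c) (hsub ?_)⟩
    · exact hstart.elim (by omega) (· (hsub (by simp; omega)))
    · simp; omega
  · rintro ⟨hck, hk⟩
    exact ⟨hrun k (by simp; omega), fun x hx => hrun x (by simp at hx ⊢; omega)⟩

theorem card_compF (hc : c ∈ leftEnds S) : #(compF S c) = runLength S c := by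
  simp [compF_eq_Ico hc]

theorem add_runLength_le_of_mem_leftEnds {c' : ℕ} (hc' : c' ∈ leftEnds S) (hlt : c < c') :
    c + runLength S c ≤ c' := by
  by_contra! h
  have hmem : c' - 1 ∈ S := by
    simpa [show c + (c' - 1 - c) = c' - 1 by omega] using
      add_mem_of_lt_runLength (S := S) (j := c) (k := c' - 1 - c) (by omega)
  exact (mem_leftEnds.mp hc').2.elim (by omega) (· hmem)

theorem pairwiseDisjoint_compF : (leftEnds S : Set ℕ).PairwiseDisjoint (compF S) := by
  intro c hc c' hc' hne
  have key : ∀ {x y}, x ∈ leftEnds S → y ∈ leftEnds S → x < y →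
      Disjoint (compF S x) (compF S y) := fun hx hy hxy => by
    have := add_runLength_le_of_mem_leftEnds (S := S) hy hxy
    rw [compF_eq_Ico hx, compF_eq_Ico hy, disjoint_left]
    simp only [mem_Ico]
    omega
  rcases lt_or_gt_of_ne hne with h | h
  · exact key hc hc' h
  · exact (key hc' hc h).symm

/-- `j ∈ S` lies in the component of the least `c` with `[c, j] ⊆ S`. -/
theorem biUnion_compF_leftEnds (S : Finset ℕ) : (leftEnds S).biUnion (compF S) = S := by
  refine Subset.antisymm (biUnion_subset.mpr fun _ _ => filter_subset _ _) fun j hj => ?_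
  have hex : ∃ c, Icc c j ⊆ S := ⟨j, by simpa using hj⟩
  set c := Nat.find hex
  have hc : Icc c j ⊆ S := Nat.find_spec hex
  have hcj : c ≤ j := Nat.find_min' hex (by simpa using hj)
  have hcS : c ∈ S := hc (by simp [hcj])
  have hstart : c = 0 ∨ c - 1 ∉ S := by
    by_contra! h
    refine Nat.find_min hex (m := c - 1) (by omega) fun x hx => ?_
    rcases eq_or_ne x (c - 1) with rfl | hx'
    · exact h.2
    · exact hc (by simp at hx ⊢; omega)
  exact mem_biUnion.mpr ⟨c, mem_leftEnds.mpr ⟨hcS, hstart⟩,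
    mem_filter.mpr ⟨hj, by simpa [hcj] using hc⟩⟩

theorem card_filter_odd_sub_Ico (c t : ℕ) :
    #((Ico c (c + t)).filter fun j => Odd (c + t - j)) = (t + 1) / 2 := by
  induction t generalizing c with
  | zero => simp
  | succ t ih =>
    have hIco : Ico c (c + 1 + t) = insert c (Ico (c + 1) (c + 1 + t)) := by
      ext x; simp; omega
    rw [← add_assoc, add_right_comm, hIco, filter_insert, show c + 1 + t - c = t + 1 by omega]
    split_ifs with h
    · rw [card_insert_of_notMem (by simp), ih, Nat.odd_iff] at *
      omega
    · rw [ih, Nat.odd_iff] at *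
      omega

/-- A component `[c, c + t)` contains `⌈t / 2⌉` elements whose run has odd length. -/
theorem sum_leftEnds_eq_card_filter_odd (S : Finset ℕ) :
    ∑ c ∈ leftEnds S, (#(compF S c) + 1) / 2 = #(S.filter fun j => Odd (runLength S j)) := by
  have hblock : ∀ c ∈ leftEnds S,
      (#(compF S c) + 1) / 2 = #((compF S c).filter fun j => Odd (runLength S j)) := by
    intro c hc
    have hrun : ∀ j ∈ Ico c (c + runLength S c), runLength S j = c + runLength S c - j := by
      intro j hj
      simp only [mem_Ico] at hj
      refine runLength_eq ?_ fun k hk => ?_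
      · rw [show j + (c + runLength S c - j) = c + runLength S c by omega]
        exact add_runLength_notMem
      simpa [show c + (j - c + k) = j + k by omega] using
        add_mem_of_lt_runLength (S := S) (j := c) (k := j - c + k) (by omega)
    rw [card_compF hc, compF_eq_Ico hc, filter_congr fun j hj => by rw [hrun j hj],
      card_filter_odd_sub_Ico]
  rw [sum_congr rfl hblock,
    ← card_biUnion (pairwiseDisjoint_compF.mono fun _ => filter_subset _ _), ← filter_biUnion,
    biUnion_compF_leftEnds]

theorem mem_of_odd_runLength (h : Odd (runLength S j)) : j ∈ S := by
  by_contra hj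
  simp [runLength_eq_zero hj] at h

theorem card_filter_odd_runLength_inter_pair (hj : j ∈ S) :
    #((S.filter fun k => Odd (runLength S k)) ∩ {j, j + 1}) = 1 := by
  rw [card_eq_one]
  rcases Nat.even_or_odd (runLength S (j + 1)) with h | h
  · refine ⟨j, ?_⟩
    ext k
    have : ¬Odd (runLength S (j + 1)) := Nat.not_odd_iff_even.mpr h
    simp only [mem_inter, mem_filter, mem_insert, mem_singleton]
    constructor
    · rintro ⟨⟨-, hodd⟩, rfl | rfl⟩
      · rfl
      · exact absurd hodd this
    · rintro rfl; exact ⟨⟨hj, by rw [runLength_eq_succ hj]; exact h.add_one⟩, Or.inl rfl⟩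
  · refine ⟨j + 1, ?_⟩
    ext k
    have : ¬Odd (runLength S j) := by
      rw [runLength_eq_succ hj, Nat.not_odd_iff_even]; exact h.add_one
    simp only [mem_inter, mem_filter, mem_insert, mem_singleton]
    constructor
    · rintro ⟨⟨-, hodd⟩, rfl | rfl⟩
      · exact absurd hodd this
      · rfl
    · rintro rfl; exact ⟨⟨mem_of_odd_runLength h, h⟩, Or.inr rfl⟩

end Components

theorem ecdL_eq_card_filter_odd (a : List ℕ) :
    ecdL a = #((Mset a).filter fun j => Odd (runLength (Mset a) j)) :=
  sum_leftEnds_eq_card_filter_odd _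

theorem mem_ActF {a : List ℕ} {j : ℕ} :
    j ∈ ActF a ↔ j ∈ Mset a ∨ (j ≠ 0 ∧ j - 1 ∈ Mset a) := by
  simp only [ActF, mem_union, mem_image]
  constructor
  · rintro (h | ⟨x, hx, rfl⟩)
    · exact Or.inl h
    · exact Or.inr ⟨by omega, by simpa using hx⟩
  · rintro (h | ⟨h1, h2⟩)
    · exact Or.inl h
    · exact Or.inr ⟨j - 1, h2, by omega⟩

theorem survivesB_iff (a : List ℕ) (j : ℕ) :
    survivesB a j = true ↔ (j = 0 ∨ j - 1 ∉ Mset a) ∧ Even (runLength (Mset a) j) := by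
  rw [survivesB, decide_eq_true_eq, mem_ActF]
  by_cases hj : j ∈ Mset a
  · constructor
    · rintro (h | ⟨hl, he⟩)
      · exact absurd (Or.inl hj) h
      · exact ⟨(mem_leftEnds.mp hl).2, card_compF hl ▸ he⟩
    · rintro ⟨hl, he⟩
      have hl' : j ∈ leftEnds (Mset a) := mem_leftEnds.mpr ⟨hj, hl⟩
      exact Or.inr ⟨hl', (card_compF hl').symm ▸ he⟩
  · have hl : j ∉ leftEnds (Mset a) := fun h => hj (mem_leftEnds.mp h).1
    simp only [hj, hl, runLength_eq_zero hj, false_or, false_and, or_false, Even.zero, and_true]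
    tauto

theorem survivesB_succ_eq_false {a : List ℕ} {j : ℕ} (hj : j ∈ Mset a) :
    survivesB a (j + 1) = false := by
  rw [Bool.eq_false_iff, Ne, survivesB_iff]
  simp [hj]

theorem survivesB_eq_decide {a : List ℕ} {j : ℕ} (hj : j = 0 ∨ j - 1 ∉ Mset a) :
    survivesB a j = decide (Even (runLength (Mset a) j)) := by
  rw [Bool.eq_iff_iff, survivesB_iff, decide_eq_true_eq]
  exact and_iff_right hj

theorem mem_Mset {a : List ℕ} {j : ℕ} :
    j ∈ Mset a ↔ j + 1 < a.length ∧ a.getD j 0 + a.getD (j + 1) 0 = sprL a := by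
  simp only [Mset, mem_filter, mem_range]
  constructor <;> rintro ⟨h1, h2⟩ <;> exact ⟨by omega, h2⟩

theorem le_sprL {a : List ℕ} {j : ℕ} (h : j + 1 < a.length) :
    a.getD j 0 + a.getD (j + 1) 0 ≤ sprL a :=
  le_sup (f := fun i => a.getD i 0 + a.getD (i + 1) 0) (mem_range.mpr (by omega))

theorem sprL_le {a : List ℕ} {s : ℕ}
    (h : ∀ j, j + 1 < a.length → a.getD j 0 + a.getD (j + 1) 0 ≤ s) : sprL a ≤ s :=
  Finset.sup_le fun j hj => h j (by simp at hj; omega)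

theorem sigmaL_congr {a b : List ℕ} (hlen : a.length = b.length) (hsum : a.sum = b.sum)
    (hecd : ecdL a = ecdL b) (hspr : sprL a = sprL b) (homega : omegaL a = omegaL b) :
    sigmaL a = sigmaL b := by
  rcases a with _ | ⟨x, a⟩ <;> rcases b with _ | ⟨y, b⟩
  · rfl
  all_goals simp only [List.length_cons, List.length_nil] at hlen
  · omega
  · omega
  · simp only [sigmaL, sigmaAux, ← hlen, hsum, hecd, hspr, homega, List.length_cons]

section ListLemmas

variable {α : Type*} {p q : ℕ → Bool} {f g : ℕ → α}

theorem sum_set_add_getD (l : List ℕ) {k : ℕ} (x : ℕ) (hk : k < l.length) :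
    (l.set k x).sum + l.getD k 0 = l.sum + x := by
  induction l generalizing k with
  | nil => simp at hk
  | cons y t ih =>
    cases k with
    | zero => simp; omega
    | succ k =>
      have := ih (k := k) (by simpa using hk)
      simp only [List.set_cons_succ, List.sum_cons, List.getD_cons_succ]
      omega

theorem map_filter_congr {l : List ℕ} (hp : ∀ j ∈ l, p j = q j)
    (hf : ∀ j ∈ l, p j → f j = g j) : (l.filter p).map f = (l.filter q).map g := by
  rw [← List.filter_congr hp]
  exact List.map_congr_left fun j hj => hf j (List.mem_of_mem_filter hj) (List.of_mem_filter hj)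

theorem map_filter_range_eq_of_window {n i k : ℕ} (hn : i + k ≤ n)
    (hp : ∀ j, j < i ∨ i + k ≤ j → p j = q j) (hf : ∀ j, j < i ∨ i + k ≤ j → p j → f j = g j)
    (hw : ((List.range' i k).filter p).map f = ((List.range' i k).filter q).map g) :
    ((List.range n).filter p).map f = ((List.range n).filter q).map g := by
  have hsplit : List.range n =
      List.range' 0 i ++ (List.range' i k ++ List.range' (i + k) (n - (i + k))) := by
    have h := List.range'_append_1 (s := 0) (m := i) (n := k + (n - (i + k)))
    rw [zero_add] at h
    rw [List.range'_append_1, h, List.range_eq_range']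
    congr 1
    omega
  have houter : ∀ l : List ℕ, (∀ j ∈ l, j < i ∨ i + k ≤ j) →
      (l.filter p).map f = (l.filter q).map g := fun l hl =>
    map_filter_congr (fun j hj => hp j (hl j hj)) (fun j hj => hf j (hl j hj))
  simp only [hsplit, List.filter_append, List.map_append, hw]
  rw [houter _ fun j hj => Or.inl (by simp at hj; omega),
    houter (List.range' (i + k) _) fun j hj => Or.inr (by simp at hj; omega)]

end ListLemmas

/-- The tuple `𝔞′` of the raising step at `i`. -/
def raiseStep (a : List ℕ) (i : ℕ) : List ℕ :=
  (a.set i (a.getD i 0 + 1)).set (i + 1) (a.getD (i + 1) 0 - 1)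

structure IsRaisingIndex (a : List ℕ) (i : ℕ) : Prop where
  mem : i ∈ Mset a
  getD_succ_pos : 0 < a.getD (i + 1) 0
  getD_pred_lt : 1 ≤ i → a.getD (i - 1) 0 < a.getD (i + 1) 0

section RaiseStep

variable {a : List ℕ} {i j : ℕ}

@[simp]
theorem length_raiseStep : (raiseStep a i).length = a.length := by
  simp [raiseStep]

theorem getD_raiseStep_of_ne (h1 : j ≠ i) (h2 : j ≠ i + 1) :
    (raiseStep a i).getD j 0 = a.getD j 0 := by
  simp [raiseStep, List.getD_eq_getElem?_getD, List.getElem?_set_ne (Ne.symm h1),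
    List.getElem?_set_ne (Ne.symm h2)]

theorem getD_raiseStep_self (h : i < a.length) : (raiseStep a i).getD i 0 = a.getD i 0 + 1 := by
  simp [raiseStep, List.getD_eq_getElem?_getD, h]

theorem getD_raiseStep_succ (h : i + 1 < a.length) :
    (raiseStep a i).getD (i + 1) 0 = a.getD (i + 1) 0 - 1 := by
  simp [raiseStep, List.getD_eq_getElem?_getD, h]

theorem getD_add_getD_raiseStep_of_ne (h1 : j ≠ i) (h2 : j ≠ i + 1) (h3 : j + 1 ≠ i) :
    (raiseStep a i).getD j 0 + (raiseStep a i).getD (j + 1) 0 =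
      a.getD j 0 + a.getD (j + 1) 0 := by
  rw [getD_raiseStep_of_ne h1 h2, getD_raiseStep_of_ne h3 (by omega)]

theorem sum_raiseStep (h : i + 1 < a.length) (hpos : 0 < a.getD (i + 1) 0) :
    (raiseStep a i).sum = a.sum := by
  have h1 := sum_set_add_getD a (a.getD i 0 + 1) (k := i) (by omega)
  have h2 := sum_set_add_getD (a.set i (a.getD i 0 + 1)) (a.getD (i + 1) 0 - 1) (k := i + 1)
    (by simpa using h)
  have h3 : (a.set i (a.getD i 0 + 1)).getD (i + 1) 0 = a.getD (i + 1) 0 := by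
    simp [List.getD_eq_getElem?_getD, List.getElem?_set_ne]
  rw [h3] at h2
  rw [raiseStep]
  omega

end RaiseStep

namespace IsRaisingIndex

variable {a : List ℕ} {i j : ℕ}

theorem succ_lt_length (h : IsRaisingIndex a i) : i + 1 < a.length :=
  (mem_Mset.mp h.mem).1

theorem getD_add_getD_succ (h : IsRaisingIndex a i) :
    a.getD i 0 + a.getD (i + 1) 0 = sprL a :=
  (mem_Mset.mp h.mem).2

theorem pred_notMem_Mset (h : IsRaisingIndex a i) (hi : 1 ≤ i) : i - 1 ∉ Mset a := fun hm => by
  have hsum := (mem_Mset.mp hm).2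
  rw [Nat.sub_add_cancel hi] at hsum
  have := h.getD_pred_lt hi
  have := h.getD_add_getD_succ
  omega

theorem sprL_raiseStep (h : IsRaisingIndex a i) : sprL (raiseStep a i) = sprL a := by
  have hi := h.succ_lt_length
  have hpos := h.getD_succ_pos
  have hspr := h.getD_add_getD_succ
  refine le_antisymm (sprL_le fun j hj => ?_) ?_
  · rw [length_raiseStep] at hj
    by_cases h1 : j = i
    · subst h1
      rw [getD_raiseStep_self (by omega), getD_raiseStep_succ hi]
      omega
    by_cases h2 : j = i + 1
    · subst h2
      rw [getD_raiseStep_succ hi, getD_raiseStep_of_ne (by omega) (by omega)]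
      have := le_sprL hj
      omega
    by_cases h3 : j + 1 = i
    · subst h3
      rw [getD_raiseStep_of_ne h1 h2, getD_raiseStep_self (by omega)]
      have := h.getD_pred_lt (by omega)
      simp only [Nat.add_sub_cancel] at this
      omega
    rw [getD_add_getD_raiseStep_of_ne h1 h2 h3]
    exact le_sprL hj
  · have := le_sprL (a := raiseStep a i) (j := i) (by simpa using hi)
    rw [getD_raiseStep_self (by omega), getD_raiseStep_succ hi] at this
    omega

theorem mem_Mset_raiseStep (h : IsRaisingIndex a i) : i ∈ Mset (raiseStep a i) := by
  have hi := h.succ_lt_length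
  have := h.getD_succ_pos
  rw [mem_Mset, length_raiseStep, h.sprL_raiseStep, getD_raiseStep_self (by omega),
    getD_raiseStep_succ hi, ← h.getD_add_getD_succ]
  exact ⟨hi, by omega⟩

theorem succ_notMem_Mset_raiseStep (h : IsRaisingIndex a i) : i + 1 ∉ Mset (raiseStep a i) := by
  rw [mem_Mset, length_raiseStep, h.sprL_raiseStep, getD_raiseStep_succ h.succ_lt_length,
    getD_raiseStep_of_ne (by omega) (by omega)]
  rintro ⟨hlt, heq⟩
  have := le_sprL hlt
  have := h.getD_succ_pos
  omega

theorem mem_Mset_raiseStep_iff (h : IsRaisingIndex a i) (h1 : j ≠ i) (h2 : j ≠ i + 1)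
    (h3 : j + 1 ≠ i) : j ∈ Mset (raiseStep a i) ↔ j ∈ Mset a := by
  rw [mem_Mset, mem_Mset, length_raiseStep, h.sprL_raiseStep,
    getD_add_getD_raiseStep_of_ne h1 h2 h3]

theorem runLength_Mset_raiseStep_of_succ_lt (h : IsRaisingIndex a i) (hj : i + 1 < j) :
    runLength (Mset (raiseStep a i)) j = runLength (Mset a) j :=
  runLength_congr fun _ hk => h.mem_Mset_raiseStep_iff (by omega) (by omega) (by omega)

theorem runLength_Mset_raiseStep_self (h : IsRaisingIndex a i) :
    runLength (Mset (raiseStep a i)) i = 1 := by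
  rw [runLength_eq_succ h.mem_Mset_raiseStep, runLength_eq_zero h.succ_notMem_Mset_raiseStep]

/-- Away from `i, i + 1`, the raising step changes run lengths of `M` by `0` or `2`: the run
ending just before `i - 1 ∉ M(a)` may be prolonged through `i - 1, i`. -/
theorem even_runLength_Mset_raiseStep_iff (h : IsRaisingIndex a i) (h1 : j ≠ i)
    (h2 : j ≠ i + 1) :
    Even (runLength (Mset (raiseStep a i)) j) ↔ Even (runLength (Mset a) j) := by
  rcases lt_or_gt_of_ne h1 with hj | hj
  · refine even_runLength_iff_of_agree_below (m := i - 1) ?_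
      (fun k hk => h.mem_Mset_raiseStep_iff (by omega) (by omega) (by omega)) (by omega)
    rw [runLength_eq_zero (h.pred_notMem_Mset (by omega))]
    by_cases hm : i - 1 ∈ Mset (raiseStep a i)
    · rw [runLength_eq_succ hm, Nat.sub_add_cancel (by omega), h.runLength_Mset_raiseStep_self]
      decide
    · rw [runLength_eq_zero hm]
  · rw [h.runLength_Mset_raiseStep_of_succ_lt (by omega)]

theorem survivesB_raiseStep_of_ne (h : IsRaisingIndex a i) (h1 : j ≠ i) (h2 : j ≠ i + 1)
    (h3 : j ≠ i + 2) : survivesB (raiseStep a i) j = survivesB a j := by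
  rw [Bool.eq_iff_iff, survivesB_iff, survivesB_iff, h.even_runLength_Mset_raiseStep_iff h1 h2]
  rcases Nat.eq_zero_or_pos j with rfl | hj
  · simp
  · rw [h.mem_Mset_raiseStep_iff (by omega) (by omega) (by omega)]

theorem survivesB_raiseStep_self (h : IsRaisingIndex a i) :
    survivesB (raiseStep a i) i = false := by
  rw [Bool.eq_false_iff, Ne, survivesB_iff, h.runLength_Mset_raiseStep_self]
  simp

theorem survivesB_raiseStep_add_two (h : IsRaisingIndex a i) :
    survivesB (raiseStep a i) (i + 2) = decide (Even (runLength (Mset a) (i + 2))) := by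
  rw [survivesB_eq_decide (Or.inr h.succ_notMem_Mset_raiseStep),
    h.runLength_Mset_raiseStep_of_succ_lt (by omega)]

theorem survivesB_self (h : IsRaisingIndex a i) :
    survivesB a i = decide (Even (runLength (Mset a) i)) := by
  refine survivesB_eq_decide ?_
  rcases Nat.eq_zero_or_pos i with hi | hi
  · exact Or.inl hi
  · exact Or.inr (h.pred_notMem_Mset hi)

/-- If `i + 1 ∈ M(a)`, the surviving entry `a_i` of `ω(a)` reappears as the surviving entry
`a'_{i+2} = a_{i+2} = a_i` of `ω(a')`; otherwise neither `i` nor `i + 1` survives in either. -/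
theorem omegaL_raiseStep (h : IsRaisingIndex a i) : omegaL (raiseStep a i) = omegaL a := by
  unfold omegaL
  rw [length_raiseStep]
  by_cases hd : i + 1 ∈ Mset a
  · obtain ⟨hlen, hpair⟩ := mem_Mset.mp hd
    have hval : a.getD (i + 2) 0 = a.getD i 0 := by
      have := h.getD_add_getD_succ
      rw [show i + 1 + 1 = i + 2 by ring] at hpair
      omega
    have hrun : runLength (Mset a) i = runLength (Mset a) (i + 2) + 2 := by
      rw [runLength_eq_succ h.mem, runLength_eq_succ hd]
    refine map_filter_range_eq_of_window (n := a.length) (i := i) (k := 3) (by omega)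
      (fun j hj => h.survivesB_raiseStep_of_ne (by omega) (by omega) (by omega))
      (fun j hj _ => getD_raiseStep_of_ne (j := j) (by omega) (by omega)) ?_
    have hwin : List.range' i 3 = [i, i + 1, i + 2] := rfl
    rw [hwin]
    simp only [List.filter_cons, h.survivesB_raiseStep_self, h.survivesB_raiseStep_add_two,
      survivesB_succ_eq_false h.mem, survivesB_succ_eq_false h.mem_Mset_raiseStep,
      survivesB_succ_eq_false hd, h.survivesB_self, hrun, Nat.even_add, even_two, iff_true]
    by_cases he : Even (runLength (Mset a) (i + 2))
    · have := (getD_raiseStep_of_ne (a := a) (show i + 2 ≠ i by omega) (by omega)).trans hval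
      simpa [he, List.getD_eq_getElem?_getD] using this
    · simp [he]
  · have hrun : runLength (Mset a) i = 1 := by
      rw [runLength_eq_succ h.mem, runLength_eq_zero hd]
    refine map_filter_congr (fun j _ => ?_) (fun j _ hj => getD_raiseStep_of_ne ?_ ?_)
    · by_cases h1 : j = i
      · rw [h1, h.survivesB_raiseStep_self, h.survivesB_self, hrun]
        decide
      by_cases h2 : j = i + 1
      · rw [h2, survivesB_succ_eq_false h.mem_Mset_raiseStep, survivesB_succ_eq_false h.mem]
      by_cases h3 : j = i + 2
      · rw [h3, h.survivesB_raiseStep_add_two, survivesB_eq_decide (Or.inr hd)]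
      exact h.survivesB_raiseStep_of_ne h1 h2 h3
    · rintro rfl
      rw [h.survivesB_raiseStep_self] at hj
      exact Bool.false_ne_true hj
    · rintro rfl
      rw [survivesB_succ_eq_false h.mem_Mset_raiseStep] at hj
      exact Bool.false_ne_true hj

/-- Both `{i, i + 1}`-parts of the odd-run sets have one element, and elsewhere they agree. -/
theorem ecdL_raiseStep (h : IsRaisingIndex a i) : ecdL (raiseStep a i) = ecdL a := by
  rw [ecdL_eq_card_filter_odd, ecdL_eq_card_filter_odd, ← card_sdiff_add_card_inter _ {i, i + 1},
    ← card_sdiff_add_card_inter ((Mset a).filter fun j => Odd (runLength (Mset a) j)) {i, i + 1},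
    card_filter_odd_runLength_inter_pair h.mem_Mset_raiseStep,
    card_filter_odd_runLength_inter_pair h.mem]
  congr 2
  ext j
  simp only [mem_sdiff, mem_filter, mem_insert, mem_singleton, not_or]
  refine ⟨fun ⟨⟨_, ho⟩, hj⟩ => ?_, fun ⟨⟨_, ho⟩, hj⟩ => ?_⟩
  all_goals
    have hpar := (h.even_runLength_Mset_raiseStep_iff hj.1 hj.2).not
    simp only [Nat.not_even_iff_odd] at hpar
  · exact ⟨⟨mem_of_odd_runLength (hpar.mp ho), hpar.mp ho⟩, hj⟩
  · exact ⟨⟨mem_of_odd_runLength (hpar.mpr ho), hpar.mpr ho⟩, hj⟩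

end IsRaisingIndex

end OHara

open OHara in
theorem raising_step_preserves_omega_sigma_general (a : List ℕ)
    (i : ℕ) (hi : i ∈ Mset a) (hpos : 0 < a.getD (i + 1) 0)
    (hlt : 1 ≤ i → a.getD (i - 1) 0 < a.getD (i + 1) 0)
    (a' : List ℕ)
    (ha' : a' = (a.set i (a.getD i 0 + 1)).set (i + 1) (a.getD (i + 1) 0 - 1)) :
    omegaL a' = omegaL a ∧ sigmaL a' = sigmaL a := by
  have h : IsRaisingIndex a i := ⟨hi, hpos, hlt⟩
  obtain rfl : a' = raiseStep a i := ha'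
  exact ⟨h.omegaL_raiseStep, sigmaL_congr length_raiseStep (sum_raiseStep h.succ_lt_length hpos)
    h.ecdL_raiseStep h.sprL_raiseStep h.omegaL_raiseStep⟩

open OHara in
/-- One step of the raising algorithm preserves `ω`, and consequently the signature. -/
theorem raising_step_preserves_omega_sigma (n m : ℕ) (hn : 1 ≤ n)
    (a : List ℕ) (hlen : a.length = n + 1) (hsum : a.sum = m)
    (i : ℕ) (hi : i ∈ Mset a) (hpos : 0 < a.getD (i + 1) 0)
    (hlt : 1 ≤ i → a.getD (i - 1) 0 < a.getD (i + 1) 0)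
    (a' : List ℕ)
    (ha' : a' = (a.set i (a.getD i 0 + 1)).set (i + 1) (a.getD (i + 1) 0 - 1)) :
    omegaL a' = omegaL a ∧ sigmaL a' = sigmaL a :=
  raising_step_preserves_omega_sigma_general a i hi hpos hlt a' ha'
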